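/- Let G be a graph on vertex set [r] = {1,…,r} and H a graph on [ℓ] = {1,…,ℓ}, and suppose g : [r] → [N] and f : [ℓ] → [N] realize G and H as pullbacks of a common graph W on [N]. Define M := { a ∈ M_{ℓ,r}(ℂ) : a_{ij} = 0 whenever f(i) ≠ g(j) }. Then M* S_H M ⊆ S_G and M S_G M* ⊆ S_H, where S_G := span{ E_{jj'} : j ≃ j' in G } ⊆ M_r(ℂ) and S_H := span{ E_{ii'} : i ≃ i' in H } ⊆ M_ℓ(ℂ). Moreover the linear span of M* S_H M equals S_G and the linear span of M S_G M* equals S_H; in particular S_G and S_H are TRO-equivalent. -/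

import Mathlib

/-!
The operator systems and the TRO are all spaces of matrices supported on a relation: `S_G` and
`S_H` on the reflexive adjacencies, `M` on `f i = g j`. Supports compose under multiplication,
so `M* S_H M` is supported on `{(j, j') | ∃ i i', f i = g j, i ≃ i', f i' = g j'}`, which lies
in `≃_G` because both graphs are pulled back from `W`. Conversely, by surjectivity every matrix
unit `E_{jj'}` with `j ≃ j'` factors as `E_{ij}* E_{ii'} E_{i'j'}` with `f i = g j` and
`f i' = g j'`, and such units `E_{ij}` lie in `M`; with `i = i'` the same factorization spans
the identity.
-/

open Matrix

namespace Matrix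

variable {m n p α : Type*} [Semiring α]

variable (α) in
def supportedOn (R : m → n → Prop) : Submodule α (Matrix m n α) where
  carrier := {a | ∀ i j, ¬R i j → a i j = 0}
  add_mem' ha hb i j h := by simp [ha i j h, hb i j h]
  zero_mem' _ _ _ := rfl
  smul_mem' c a ha i j h := by simp [ha i j h]

theorem mul_mem_supportedOn [Fintype n] {R₁ : m → n → Prop} {R₂ : n → p → Prop}
    {R : m → p → Prop} (hR : ∀ i k j, R₁ i k → R₂ k j → R i j) {a : Matrix m n α}
    {b : Matrix n p α} (ha : a ∈ supportedOn α R₁) (hb : b ∈ supportedOn α R₂) :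
    a * b ∈ supportedOn α R := fun i j h => by
  rw [mul_apply]
  refine Finset.sum_eq_zero fun k _ => ?_
  by_cases hik : R₁ i k
  · rw [hb k j fun hkj => h (hR i k j hik hkj), mul_zero]
  · rw [ha i k hik, zero_mul]

section DecidableEq

variable [DecidableEq m] [DecidableEq n]

theorem single_one_mem_supportedOn {R : m → n → Prop} {i : m} {j : n} (h : R i j) :
    single i j (1 : α) ∈ supportedOn α R := fun _ _ h' =>
  single_apply_of_ne _ _ _ _ _ (by rintro ⟨rfl, rfl⟩; exact h' h)

theorem one_mem_supportedOn_eq : (1 : Matrix m m α) ∈ supportedOn α (· = ·) := fun _ _ h =>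
  one_apply_ne h

theorem span_single_one_eq_supportedOn [Fintype m] [Fintype n] (R : m → n → Prop) :
    Submodule.span α {x | ∃ i j, R i j ∧ x = single i j (1 : α)} = supportedOn α R := by
  refine le_antisymm (Submodule.span_le.mpr ?_) fun a ha => ?_
  · rintro _ ⟨i, j, h, rfl⟩
    exact single_one_mem_supportedOn h
  rw [matrix_eq_sum_single a]
  refine Submodule.sum_mem _ fun i _ => Submodule.sum_mem _ fun j _ => ?_
  by_cases h : R i j
  · rw [← mul_one (a i j), ← smul_eq_mul, ← smul_single]
    exact Submodule.smul_mem _ _ (Submodule.subset_span ⟨i, j, h, rfl⟩)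
  · simp [ha i j h]

theorem supportedOn_le_of_single_one_mem [Fintype m] [Fintype n] {R : m → n → Prop}
    {S : Submodule α (Matrix m n α)} (h : ∀ i j, R i j → single i j (1 : α) ∈ S) :
    supportedOn α R ≤ S := by
  rw [← span_single_one_eq_supportedOn]
  exact Submodule.span_le.mpr fun _ ⟨i, j, hij, hx⟩ => hx ▸ h i j hij

end DecidableEq

section Pullback

variable [StarRing α] {X : Type*} {f : m → X} {g : n → X}

theorem conjTranspose_mem_supportedOn {R : m → n → Prop} {a : Matrix m n α}
    (ha : a ∈ supportedOn α R) : aᴴ ∈ supportedOn α (flip R) := fun j i h => by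
  rw [conjTranspose_apply, ha i j h, star_zero]

theorem conjTranspose_mul_mul_mem_supportedOn [Fintype m] {RH : m → m → Prop}
    {RG : n → n → Prop}
    (hRel : ∀ i i' j j', f i = g j → f i' = g j' → RH i i' → RG j j')
    {a b : Matrix m n α} {s : Matrix m m α} (ha : a ∈ supportedOn α fun i j => f i = g j)
    (hs : s ∈ supportedOn α RH) (hb : b ∈ supportedOn α fun i j => f i = g j) :
    aᴴ * s * b ∈ supportedOn α RG := by
  have has : aᴴ * s ∈ supportedOn α fun j i' => ∃ i, f i = g j ∧ RH i i' :=
    mul_mem_supportedOn (fun _ i _ hij hii' => ⟨i, hij, hii'⟩)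
      (conjTranspose_mem_supportedOn ha) hs
  exact mul_mem_supportedOn (fun j i' j' ⟨i, hij, hii'⟩ hi'j' => hRel i i' j j' hij hi'j' hii')
    has hb

theorem mul_mul_conjTranspose_mem_supportedOn [Fintype n] {RH : m → m → Prop}
    {RG : n → n → Prop}
    (hRel : ∀ i i' j j', f i = g j → f i' = g j' → RG j j' → RH i i')
    {a b : Matrix m n α} {s : Matrix n n α} (ha : a ∈ supportedOn α fun i j => f i = g j)
    (hs : s ∈ supportedOn α RG) (hb : b ∈ supportedOn α fun i j => f i = g j) :
    a * s * bᴴ ∈ supportedOn α RH := by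
  have has : a * s ∈ supportedOn α fun i j' => ∃ j, f i = g j ∧ RG j j' :=
    mul_mem_supportedOn (fun _ j _ hij hjj' => ⟨j, hij, hjj'⟩) ha hs
  exact mul_mem_supportedOn (fun i j' i' ⟨j, hij, hjj'⟩ hi'j' => hRel i i' j j' hij hi'j' hjj')
    has (conjTranspose_mem_supportedOn hb)

theorem mul_conjTranspose_mul_mem_supportedOn [Fintype m] [Fintype n] {a b c : Matrix m n α}
    (ha : a ∈ supportedOn α fun i j => f i = g j)
    (hb : b ∈ supportedOn α fun i j => f i = g j)
    (hc : c ∈ supportedOn α fun i j => f i = g j) :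
    a * bᴴ * c ∈ supportedOn α fun i j => f i = g j :=
  mul_mem_supportedOn (fun _ _ _ hii' hi'j => hii'.trans hi'j)
    (mul_mem_supportedOn (fun _ _ _ hij' hi'j' => hij'.trans hi'j'.symm) ha
      (conjTranspose_mem_supportedOn hb)) hc

variable [DecidableEq m] [DecidableEq n]

theorem span_conjTranspose_mul_mul_eq_supportedOn [Fintype m] [Fintype n]
    (hf : ∀ j, ∃ i, f i = g j) {RH : m → m → Prop} {RG : n → n → Prop}
    (hRel : ∀ i i' j j', f i = g j → f i' = g j' → (RH i i' ↔ RG j j')) :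
    Submodule.span α {x : Matrix n n α | ∃ a ∈ supportedOn α (fun i j => f i = g j),
      ∃ s ∈ supportedOn α RH,
      ∃ b ∈ supportedOn α (fun i j => f i = g j), x = aᴴ * s * b} = supportedOn α RG := by
  refine le_antisymm (Submodule.span_le.mpr ?_) (supportedOn_le_of_single_one_mem ?_)
  · rintro _ ⟨a, ha, s, hs, b, hb, rfl⟩
    exact conjTranspose_mul_mul_mem_supportedOn (fun i i' j j' hi hi' => (hRel i i' j j' hi hi').1)
      ha hs hb
  · intro j j' hjj'
    obtain ⟨i, hi⟩ := hf j
    obtain ⟨i', hi'⟩ := hf j'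
    refine Submodule.subset_span ⟨single i j 1, single_one_mem_supportedOn hi,
      single i i' 1, single_one_mem_supportedOn ((hRel i i' j j' hi hi').2 hjj'),
      single i' j' 1, single_one_mem_supportedOn hi', ?_⟩
    simp [conjTranspose_single]

theorem span_mul_mul_conjTranspose_eq_supportedOn [Fintype m] [Fintype n]
    (hg : ∀ i, ∃ j, g j = f i) {RH : m → m → Prop} {RG : n → n → Prop}
    (hRel : ∀ i i' j j', f i = g j → f i' = g j' → (RH i i' ↔ RG j j')) :
    Submodule.span α {x : Matrix m m α | ∃ a ∈ supportedOn α (fun i j => f i = g j),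
      ∃ s ∈ supportedOn α RG,
      ∃ b ∈ supportedOn α (fun i j => f i = g j), x = a * s * bᴴ} = supportedOn α RH := by
  refine le_antisymm (Submodule.span_le.mpr ?_) (supportedOn_le_of_single_one_mem ?_)
  · rintro _ ⟨a, ha, s, hs, b, hb, rfl⟩
    exact mul_mul_conjTranspose_mem_supportedOn (fun i i' j j' hi hi' => (hRel i i' j j' hi hi').2)
      ha hs hb
  · intro i i' hii'
    obtain ⟨j, hj⟩ := hg i
    obtain ⟨j', hj'⟩ := hg i'
    refine Submodule.subset_span ⟨single i j 1, single_one_mem_supportedOn hj.symm,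
      single j j' 1, single_one_mem_supportedOn ((hRel i i' j j' hj.symm hj'.symm).1 hii'),
      single i' j' 1, single_one_mem_supportedOn hj'.symm, ?_⟩
    simp [conjTranspose_single]

theorem one_mem_span_conjTranspose_mul [Fintype m] [Fintype n] (hf : ∀ j, ∃ i, f i = g j) :
    (1 : Matrix n n α) ∈ Submodule.span α {x : Matrix n n α |
      ∃ a ∈ supportedOn α (fun i j => f i = g j),
      ∃ b ∈ supportedOn α (fun i j => f i = g j), x = aᴴ * b} := by
  refine supportedOn_le_of_single_one_mem ?_ one_mem_supportedOn_eq
  rintro j _ rfl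
  obtain ⟨i, hi⟩ := hf j
  exact Submodule.subset_span ⟨single i j 1, single_one_mem_supportedOn hi,
    single i j 1, single_one_mem_supportedOn hi, by simp [conjTranspose_single]⟩

theorem one_mem_span_mul_conjTranspose [Fintype m] [Fintype n] (hg : ∀ i, ∃ j, g j = f i) :
    (1 : Matrix m m α) ∈ Submodule.span α {x : Matrix m m α |
      ∃ a ∈ supportedOn α (fun i j => f i = g j),
      ∃ b ∈ supportedOn α (fun i j => f i = g j), x = a * bᴴ} := by
  refine supportedOn_le_of_single_one_mem ?_ one_mem_supportedOn_eq
  rintro i _ rfl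
  obtain ⟨j, hj⟩ := hg i
  exact Submodule.subset_span ⟨single i j 1, single_one_mem_supportedOn hj.symm,
    single i j 1, single_one_mem_supportedOn hj.symm, by simp [conjTranspose_single]⟩

end Pullback

end Matrix

theorem stmt_14 {r l N : ℕ} (G : SimpleGraph (Fin r)) (Hg : SimpleGraph (Fin l))
    (W : SimpleGraph (Fin N)) (g : Fin r → Fin N) (f : Fin l → Fin N)
    (hg : Function.Surjective g) (hf : Function.Surjective f)
    (hGpull : ∀ j j' : Fin r, (G.Adj j j' ∨ j = j') ↔ (W.Adj (g j) (g j') ∨ g j = g j'))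
    (hHpull : ∀ i i' : Fin l, (Hg.Adj i i' ∨ i = i') ↔ (W.Adj (f i) (f i') ∨ f i = f i'))
    (M : Set (Matrix (Fin l) (Fin r) ℂ))
    (hM : M = {a | ∀ i j, f i ≠ g j → a i j = 0})
    (SG : Submodule ℂ (Matrix (Fin r) (Fin r) ℂ))
    (hSG : SG = Submodule.span ℂ {x | ∃ j j', (G.Adj j j' ∨ j = j') ∧
      x = Matrix.single j j' (1 : ℂ)})
    (SH : Submodule ℂ (Matrix (Fin l) (Fin l) ℂ))
    (hSH : SH = Submodule.span ℂ {x | ∃ i i', (Hg.Adj i i' ∨ i = i') ∧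
      x = Matrix.single i i' (1 : ℂ)}) :
    (∀ a ∈ M, ∀ s ∈ SH, ∀ b ∈ M, aᴴ * s * b ∈ SG) ∧
    (∀ a ∈ M, ∀ s ∈ SG, ∀ b ∈ M, a * s * bᴴ ∈ SH) ∧
    Submodule.span ℂ {x : Matrix (Fin r) (Fin r) ℂ |
        ∃ a ∈ M, ∃ s ∈ SH, ∃ b ∈ M, x = aᴴ * s * b} = SG ∧
    Submodule.span ℂ {x : Matrix (Fin l) (Fin l) ℂ |
        ∃ a ∈ M, ∃ s ∈ SG, ∃ b ∈ M, x = a * s * bᴴ} = SH ∧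
    (∀ a ∈ M, ∀ b ∈ M, ∀ c ∈ M, a * bᴴ * c ∈ M) ∧
    (1 : Matrix (Fin r) (Fin r) ℂ) ∈
      Submodule.span ℂ {x : Matrix (Fin r) (Fin r) ℂ | ∃ a ∈ M, ∃ b ∈ M, x = aᴴ * b} ∧
    (1 : Matrix (Fin l) (Fin l) ℂ) ∈
      Submodule.span ℂ {x : Matrix (Fin l) (Fin l) ℂ | ∃ a ∈ M, ∃ b ∈ M, x = a * bᴴ} := by
  have hMatch : M = supportedOn ℂ fun i j => f i = g j := hM
  subst hMatch hSG hSH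
  rw [span_single_one_eq_supportedOn, span_single_one_eq_supportedOn]
  have hRel : ∀ i i' j j', f i = g j → f i' = g j' →
      ((Hg.Adj i i' ∨ i = i') ↔ (G.Adj j j' ∨ j = j')) := by
    intro i i' j j' hi hi'
    rw [hHpull, hGpull, hi, hi']
  exact ⟨fun a ha s hs b hb => conjTranspose_mul_mul_mem_supportedOn
      (fun i i' j j' hi hi' => (hRel i i' j j' hi hi').1) ha hs hb,
    fun a ha s hs b hb => mul_mul_conjTranspose_mem_supportedOn
      (fun i i' j j' hi hi' => (hRel i i' j j' hi hi').2) ha hs hb,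
    span_conjTranspose_mul_mul_eq_supportedOn (fun j => hf (g j)) hRel,
    span_mul_mul_conjTranspose_eq_supportedOn (fun i => hg (f i)) hRel,
    fun _ ha _ hb _ hc => mul_conjTranspose_mul_mem_supportedOn ha hb hc,
    one_mem_span_conjTranspose_mul fun j => hf (g j),
    one_mem_span_mul_conjTranspose fun i => hg (f i)⟩
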